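/- arXiv:1912.05157 — 2 statements merged into one kernel-verified Lean document; each statement's English description precedes it below -/
import Mathlib

section
/- Let v be a complex number and define τ_v(n) = Σ_{n1·n2 = n} (n1/n2)^v. Then for every complex s with Re(s) > 1 + 2|Re(v)|, one has Σ_{n=1}^∞ τ_v(n²)/n^s = ζ(s)·ζ(s+2v)·ζ(s−2v)/ζ(2s). -/
open Complex

noncomputable def tauC (v : ℂ) (n : ℕ) : ℂ :=
  ∑ p ∈ Nat.divisorsAntidiagonal n, ((p.1 : ℂ) / (p.2 : ℂ)) ^ v

/-!
Writing `A = a² d` with `d` squarefree, the factorisations `A * B = n²` correspond bijectively to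
the triples `d * (a * b) = n` with `d` squarefree, and `(A / B) ^ v = (a / b) ^ (2v)`. Hence
`n ↦ τ_v(n²)` is the Dirichlet convolution of the indicator of squarefree numbers with `τ_{2v}`.
The L-series of `τ_{2v} = n^{2v} ⍟ n^{-2v}` is `ζ(s - 2v) ζ(s + 2v)`, and that of the squarefree
indicator is `ζ(s) / ζ(2s)`, because its convolution with the indicator of the squares is `1`.
-/

open LSeries
open scoped LSeries.notation

namespace Nat

lemma factorization_sq_mul {a d : ℕ} (ha : a ≠ 0) (hd : d ≠ 0) (p : ℕ) :
    (a ^ 2 * d).factorization p = 2 * a.factorization p + d.factorization p := by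
  simp [factorization_mul (pow_ne_zero 2 ha) hd, factorization_pow]

lemma dvd_of_sq_dvd_sq_mul_squarefree {a n x : ℕ} (ha : Squarefree a) (h : x ^ 2 ∣ n ^ 2 * a) :
    x ∣ n := by
  rcases eq_or_ne n 0 with rfl | hn
  · exact dvd_zero x
  have hx : x ≠ 0 := by rintro rfl; simp [hn, ha.ne_zero] at h
  rw [← factorization_le_iff_dvd hx hn]
  intro p
  have hp := (factorization_le_iff_dvd (by positivity) (by simp [hn, ha.ne_zero])).2 h p
  rw [factorization_sq_mul hn ha.ne_zero, factorization_pow] at hp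
  have := ha.natFactorization_le_one p
  simp only [Finsupp.smul_apply, smul_eq_mul] at hp
  omega

lemma eq_of_sq_mul_squarefree_eq {a b d e : ℕ} (hd : Squarefree d) (he : Squarefree e)
    (ha : a ≠ 0) (h : a ^ 2 * d = b ^ 2 * e) : a = b ∧ d = e := by
  have hb : b ≠ 0 := by rintro rfl; simp [ha, hd.ne_zero] at h
  -- the squarefree part is read off the parity of the exponents
  have hde : d = e := by
    refine (Squarefree.ext_iff hd he).2 fun p hp ↦ ?_
    rw [hp.dvd_iff_one_le_factorization hd.ne_zero, hp.dvd_iff_one_le_factorization he.ne_zero]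
    have := congrArg (·.factorization p) h
    simp only [factorization_sq_mul ha hd.ne_zero, factorization_sq_mul hb he.ne_zero] at this
    have := hd.natFactorization_le_one p
    have := he.natFactorization_le_one p
    omega
  subst hde
  exact ⟨pow_left_injective two_ne_zero (eq_of_mul_eq_mul_right (pos_of_ne_zero hd.ne_zero) h),
    rfl⟩

lemma exists_sq_mul_squarefree_of_mul_eq_sq {A B n : ℕ} (hn : n ≠ 0) (h : A * B = n ^ 2) :
    ∃ d a b, Squarefree d ∧ a * b * d = n ∧ A = a ^ 2 * d ∧ B = b ^ 2 * d := by
  obtain ⟨d, a, rfl, hd⟩ := sq_mul_squarefree A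
  obtain ⟨b, hb⟩ : a * d ∣ n := dvd_of_sq_dvd_sq_mul_squarefree hd ⟨B, by rw [← h]; ring⟩
  refine ⟨d, a, b, hd, by rw [hb]; ring, rfl, ?_⟩
  have : a ^ 2 * d * B = a ^ 2 * d * (b ^ 2 * d) := by rw [h, hb]; ring
  refine Nat.eq_of_mul_eq_mul_left (Nat.pos_of_ne_zero fun h₀ ↦ ?_) this
  rw [h₀, zero_mul] at h
  exact pow_ne_zero 2 hn h.symm

lemma sum_divisorsAntidiagonal_sq {M : Type*} [AddCommMonoid M] {n : ℕ} (hn : n ≠ 0)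
    (f : ℕ → ℕ → M) :
    ∑ p ∈ (n ^ 2).divisorsAntidiagonal, f p.1 p.2 =
      ∑ q ∈ n.divisorsAntidiagonal with Squarefree q.1,
        ∑ r ∈ q.2.divisorsAntidiagonal, f (r.1 ^ 2 * q.1) (r.2 ^ 2 * q.1) := by
  rw [Finset.sum_sigma']
  symm
  refine Finset.sum_bij (fun x _ ↦ (x.2.1 ^ 2 * x.1.1, x.2.2 ^ 2 * x.1.1)) ?_ ?_ ?_ (fun _ _ ↦ rfl)
  · rintro ⟨⟨d, e⟩, a, b⟩ hx
    simp only [Finset.mem_sigma, Finset.mem_filter, mem_divisorsAntidiagonal] at hx ⊢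
    obtain ⟨⟨⟨rfl, -⟩, -⟩, rfl, -⟩ := hx
    exact ⟨by ring, pow_ne_zero 2 hn⟩
  · rintro ⟨⟨d, e⟩, a, b⟩ hx ⟨⟨d', e'⟩, a', b'⟩ hx' h
    simp only [Finset.mem_sigma, Finset.mem_filter, mem_divisorsAntidiagonal] at hx hx'
    obtain ⟨⟨-, hd⟩, rfl, he⟩ := hx
    obtain ⟨⟨-, hd'⟩, rfl, -⟩ := hx'
    simp only [Prod.mk.injEq] at h
    obtain ⟨rfl, rfl⟩ := eq_of_sq_mul_squarefree_eq hd hd' (left_ne_zero_of_mul he) h.1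
    obtain ⟨rfl, -⟩ := eq_of_sq_mul_squarefree_eq hd hd (right_ne_zero_of_mul he) h.2
    rfl
  · rintro ⟨A, B⟩ hAB
    obtain ⟨d, a, b, hd, rfl, rfl, rfl⟩ :=
      exists_sq_mul_squarefree_of_mul_eq_sq hn (mem_divisorsAntidiagonal.1 hAB).1
    refine ⟨⟨(d, a * b), (a, b)⟩, ?_, rfl⟩
    simp only [Finset.mem_sigma, Finset.mem_filter, mem_divisorsAntidiagonal]
    exact ⟨⟨⟨by ring, hn⟩, hd⟩, trivial, fun h ↦ hn (by simp [h])⟩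

end Nat

lemma Complex.natCast_div_natCast_cpow (m n : ℕ) (w : ℂ) :
    ((m : ℂ) / n) ^ w = (m : ℂ) ^ w / (n : ℂ) ^ w := by
  simpa only [ofReal_natCast] using div_cpow_ofReal_nonneg m.cast_nonneg n.cast_nonneg w

lemma Complex.natCast_sq_mul_div_cpow {a b d : ℕ} (hd : d ≠ 0) (v : ℂ) :
    (((a ^ 2 * d : ℕ) : ℂ) / ((b ^ 2 * d : ℕ) : ℂ)) ^ v = ((a : ℂ) / b) ^ (2 * v) := by
  have hd' : (d : ℂ) ≠ 0 := Nat.cast_ne_zero.2 hd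
  rw [Nat.cast_mul, Nat.cast_mul, mul_div_mul_right _ _ hd', natCast_div_natCast_cpow,
    natCast_div_natCast_cpow, Nat.cast_pow, Nat.cast_pow, ← natCast_cpow_natCast_mul,
    ← natCast_cpow_natCast_mul]
  norm_num

lemma LSeries.term_natCast_cpow (w s : ℂ) :
    term (fun n : ℕ ↦ (n : ℂ) ^ w) s = term 1 (s - w) := by
  ext n
  rcases eq_or_ne n 0 with rfl | hn
  · simp
  have hn' : (n : ℂ) ≠ 0 := Nat.cast_ne_zero.2 hn
  rw [term_of_ne_zero hn, term_of_ne_zero hn, Pi.one_apply, cpow_sub _ _ hn', one_div_div]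

lemma LSeriesHasSum_natCast_cpow {w s : ℂ} (h : 1 < (s - w).re) :
    LSeriesHasSum (fun n : ℕ ↦ (n : ℂ) ^ w) s (riemannZeta (s - w)) := by
  rw [LSeriesHasSum, term_natCast_cpow]
  exact LSeriesHasSum_one h

lemma tauC_eq_convolution (w : ℂ) :
    tauC w = (fun n : ℕ ↦ (n : ℂ) ^ w) ⍟ fun n : ℕ ↦ (n : ℂ) ^ (-w) := by
  ext n
  simp only [tauC, convolution_def, natCast_div_natCast_cpow, cpow_neg]
  rfl

lemma LSeriesHasSum_tauC {w s : ℂ} (h₁ : 1 < (s - w).re) (h₂ : 1 < (s + w).re) :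
    LSeriesHasSum (tauC w) s (riemannZeta (s - w) * riemannZeta (s + w)) := by
  rw [tauC_eq_convolution]
  refine (LSeriesHasSum_natCast_cpow h₁).convolution ?_
  rw [← sub_neg_eq_add] at h₂
  simpa using LSeriesHasSum_natCast_cpow h₂

noncomputable def squarefreeIndicator (n : ℕ) : ℂ := if Squarefree n then 1 else 0

noncomputable def squareIndicator (n : ℕ) : ℂ := if IsSquare n then 1 else 0

lemma LSeriesHasSum_squareIndicator {s : ℂ} (hs : 1 < (2 * s).re) :
    LSeriesHasSum squareIndicator s (riemannZeta (2 * s)) := by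
  have hsq : Function.Injective (fun m : ℕ ↦ m ^ 2) := Nat.pow_left_injective two_ne_zero
  refine (hsq.hasSum_iff fun n hn ↦ ?_).1 ?_
  · rcases eq_or_ne n 0 with rfl | hn₀
    · exact term_zero ..
    rw [term_of_ne_zero hn₀, squareIndicator, if_neg, zero_div]
    rintro ⟨m, rfl⟩
    exact hn ⟨m, sq m⟩
  · suffices term squareIndicator s ∘ (· ^ 2) = term 1 (2 * s) from
      this ▸ LSeriesHasSum_one hs
    ext m
    rcases eq_or_ne m 0 with rfl | hm
    · simp
    simp only [Function.comp_apply, term_of_ne_zero hm, term_of_ne_zero (pow_ne_zero 2 hm),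
      squareIndicator, IsSquare.sq, if_true, Pi.one_apply, Nat.cast_pow]
    rw [← natCast_cpow_natCast_mul]
    norm_num

lemma squarefreeIndicator_convolution_squareIndicator {n : ℕ} (hn : n ≠ 0) :
    (squarefreeIndicator ⍟ squareIndicator) n = 1 := by
  obtain ⟨d, m, rfl, hd⟩ := Nat.sq_mul_squarefree n
  have hm : m ≠ 0 := by rintro rfl; simp at hn
  rw [convolution_def]
  dsimp only
  rw [Finset.sum_eq_single (d, m ^ 2)]
  · simp [squarefreeIndicator, squareIndicator, hd, IsSquare.sq]
  · rintro ⟨d', e⟩ he hne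
    unfold squarefreeIndicator squareIndicator
    split_ifs with hd' hsq <;> try simp
    obtain ⟨k, rfl⟩ := hsq
    have he : m ^ 2 * d = k ^ 2 * d' := by rw [← (Nat.mem_divisorsAntidiagonal.1 he).1]; ring
    obtain ⟨rfl, rfl⟩ := Nat.eq_of_sq_mul_squarefree_eq hd hd' hm he
    exact hne (by rw [sq])
  · exact fun h ↦ absurd (Nat.mem_divisorsAntidiagonal.2 ⟨mul_comm _ _, hn⟩) h

lemma LSeriesHasSum_squarefreeIndicator {s : ℂ} (hs : 1 < s.re) :
    LSeriesHasSum squarefreeIndicator s (riemannZeta s / riemannZeta (2 * s)) := by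
  have h2s : 1 < (2 * s).re := by simp; linarith
  have hsum : LSeriesSummable squarefreeIndicator s :=
    LSeriesSummable_of_bounded_of_one_lt_re (m := 1)
      (fun n _ ↦ by unfold squarefreeIndicator; split_ifs <;> simp) hs
  have hprod := hsum.LSeriesHasSum.convolution (LSeriesHasSum_squareIndicator h2s)
  rw [LSeriesHasSum_congr (g := 1) _ _ squarefreeIndicator_convolution_squareIndicator] at hprod
  convert hsum.LSeriesHasSum
  exact (eq_div_of_mul_eq (riemannZeta_ne_zero_of_one_lt_re h2s)
    ((LSeriesHasSum_one hs).unique hprod).symm).symm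

lemma tauC_sq_eq_convolution (v : ℂ) (n : ℕ) :
    tauC v (n ^ 2) = (squarefreeIndicator ⍟ tauC (2 * v)) n := by
  rcases eq_or_ne n 0 with rfl | hn
  · simp [tauC]
  rw [tauC, Nat.sum_divisorsAntidiagonal_sq hn (fun a b ↦ ((a : ℂ) / b) ^ v), convolution_def]
  dsimp only
  rw [Finset.sum_filter]
  refine Finset.sum_congr rfl fun q _ ↦ ?_
  unfold squarefreeIndicator tauC
  split_ifs with hd
  · rw [one_mul]
    exact Finset.sum_congr rfl fun r _ ↦ natCast_sq_mul_div_cpow hd.ne_zero v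
  · rw [zero_mul]

lemma tsum_pnat_div_cpow_eq_LSeries (f : ℕ → ℂ) (s : ℂ) :
    ∑' n : ℕ+, f n / (n : ℂ) ^ s = LSeries f s := by
  rw [LSeries, ← tsum_pnat_eq_tsum_of_eq_zero (term_zero f s)]
  exact tsum_congr fun n ↦ (term_of_ne_zero n.ne_zero f s).symm

theorem tsum_tau_sq (v s : ℂ) (hs : 1 + 2 * |v.re| < s.re) :
    ∑' n : ℕ+, tauC v (n ^ 2) / (n : ℂ) ^ s =
      riemannZeta s * riemannZeta (s + 2 * v) * riemannZeta (s - 2 * v) /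
        riemannZeta (2 * s) := by
  have hs₁ : 1 < s.re := by linarith [abs_nonneg v.re]
  have hsub : 1 < (s - 2 * v).re := by simp; linarith [le_abs_self v.re]
  have hadd : 1 < (s + 2 * v).re := by simp; linarith [neg_abs_le v.re]
  have hL := (LSeriesHasSum_squarefreeIndicator hs₁).convolution (LSeriesHasSum_tauC hsub hadd)
  rw [← funext (tauC_sq_eq_convolution v)] at hL
  rw [tsum_pnat_div_cpow_eq_LSeries (fun n ↦ tauC v (n ^ 2)), hL.LSeries_eq]
  ring
end

section
/- Let x > 2 be real. Then the supremum over y ∈ (0,1) of the function f(y) = y(1−y)/(x²/4 − y) equals (x/2 + √(x²/4 − 1))^{−2}, and it is attained at y₀ = x²/4 − (x/2)·√(x²/4 − 1), which lies in (0,1). -/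
/-!
Write `a = x/2` and `s = √(a² - 1)`, so that `(a + s)(a - s) = 1`. Then
`(a - s)² (a² - y) - y (1 - y) = (y - a (a - s))²`, hence
`f y = (a + s)⁻² - (y - y₀)² / (a² - y)` with `y₀ = a (a - s) = a / (a + s) ∈ (0, 1)`.
-/

open Real Set

lemma inv_add_eq_sub_of_sq_eq {a s : ℝ} (hs : s ^ 2 = a ^ 2 - 1) :
    (a + s)⁻¹ = a - s :=
  inv_eq_of_mul_eq_one_right (by linear_combination -hs)

lemma mul_one_sub_div_eq_sub_sq_div {a s y : ℝ} (hs : s ^ 2 = a ^ 2 - 1) (hy : y ≠ a ^ 2) :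
    y * (1 - y) / (a ^ 2 - y) = (a - s) ^ 2 - (y - (a ^ 2 - a * s)) ^ 2 / (a ^ 2 - y) := by
  have hd : a ^ 2 - y ≠ 0 := sub_ne_zero.2 (Ne.symm hy)
  rw [eq_sub_iff_add_eq, ← add_div, div_eq_iff hd]
  linear_combination y * hs

lemma sq_sub_mul_sqrt_mem_Ioo {a : ℝ} (ha : 1 < a) :
    a ^ 2 - a * √(a ^ 2 - 1) ∈ Ioo 0 1 := by
  set s := √(a ^ 2 - 1)
  have hs : s ^ 2 = a ^ 2 - 1 := sq_sqrt (by nlinarith)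
  have hs_pos : 0 < s := sqrt_pos.2 (by nlinarith)
  have hsa : s < a := by nlinarith
  -- `a² - a s = a (a - s)` and `1 = (a + s)(a - s)`
  constructor <;> nlinarith [mul_pos hs_pos (sub_pos.2 hsa)]

theorem sup_attained (x : ℝ) (hx : 2 < x) :
    let f : ℝ → ℝ := fun y => y * (1 - y) / (x ^ 2 / 4 - y)
    let y₀ : ℝ := x ^ 2 / 4 - x / 2 * Real.sqrt (x ^ 2 / 4 - 1)
    y₀ ∈ Set.Ioo (0 : ℝ) 1 ∧
      f y₀ = (x / 2 + Real.sqrt (x ^ 2 / 4 - 1))⁻¹ ^ 2 ∧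
      ∀ y ∈ Set.Ioo (0 : ℝ) 1, f y ≤ (x / 2 + Real.sqrt (x ^ 2 / 4 - 1))⁻¹ ^ 2 := by
  intro f y₀
  have ha : 1 < x / 2 := by linarith
  have hx4 : x ^ 2 / 4 = (x / 2) ^ 2 := by ring
  simp only [f, y₀, hx4]
  set a := x / 2
  set s := √(a ^ 2 - 1)
  have hs : s ^ 2 = a ^ 2 - 1 := sq_sqrt (by nlinarith)
  have hy₀ := sq_sub_mul_sqrt_mem_Ioo ha
  have ha2 : 1 < a ^ 2 := by nlinarith
  rw [inv_add_eq_sub_of_sq_eq hs]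
  refine ⟨hy₀, ?_, fun y hy ↦ ?_⟩
  · rw [mul_one_sub_div_eq_sub_sq_div hs (by linarith [hy₀.2])]
    simp
  · rw [mul_one_sub_div_eq_sub_sq_div hs (by linarith [hy.2])]
    exact sub_le_self _ (div_nonneg (sq_nonneg _) (by linarith [hy.2]))
end
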